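/- Define the deconcatenation coproduct Δ_↗ on the span of planar forests by Δ_↗(F) = Σ_{F_1 F_2 = F} F_1 ⊗ F_2 (sum over all, possibly empty, factorizations of the forest F as a concatenation). Then Δ_↗ is dual to the product ↗ under the pairing ⟨−,−⟩: ⟨Δ_↗(x), y⊗z⟩ = ⟨x, z ↗ y⟩ for all x, y, z. In particular every planar tree is primitive for Δ_↗. -/

import Mathlib

/-!
Induct on the forest `x`. For a forest `B⁺(C)·A` the pairing axioms give
`⟨B⁺(C)·A, w⟩ = ⟨A ⊗ C, (id ⊗ γ) Δ w⟩`, so both sides of the duality for `x = B⁺(C)·F` reduce,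
using the induction hypothesis for `F`, to the identity
`(id ⊗ γ) Δ(z ↗ y) = ε(y) (id ⊗ γ) Δ z + (z↗ ⊗ γ) Δ y`.
That identity holds because `z ↗ (B⁺(w)·a) = B⁺(z ↗ w)·a` and, by the infinitesimal Leibniz rule,
`(id ⊗ γ) Δ(B⁺(u)·v) = (B⁺(u) ⊗ 1)·(id ⊗ γ) Δ v + u ⊗ v`.
-/

open scoped TensorProduct

/-- Planar rooted trees; `PTree.node []` is the single-vertex tree `•`. -/
inductive PTree : Type
  | node : List PTree → PTree

/-- Planar rooted forests. -/
abbrev Forest : Type := List PTree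

instance : Monoid Forest where
  mul := fun x y => List.append x y
  one := ([] : List PTree)
  mul_assoc := List.append_assoc
  one_mul := fun _ => rfl
  mul_one := List.append_nil

/-- The infinitesimal Hopf algebra `H` of planar rooted forests. -/
abbrev H : Type := MonoidAlgebra ℚ Forest

/-- The basis element of `H` indexed by a forest. -/
noncomputable def bf (F : Forest) : H := MonoidAlgebra.of ℚ Forest F

/-- The operator `B⁺` grafting a forest on a common new root, extended linearly. -/
noncomputable def Bplus : H →ₗ[ℚ] H :=
  (Finsupp.lift H ℚ Forest fun F => bf [PTree.node F]) ∘ₗ (MonoidAlgebra.coeffLinearEquiv ℚ).toLinearMap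

/-- The map `γ`: `t_1…t_n ↦ δ_{t_1,•} t_2…t_n`, extended linearly. -/
noncomputable def gammaH : H →ₗ[ℚ] H :=
  (Finsupp.lift H ℚ Forest fun F =>
    match F with
    | PTree.node [] :: rest => bf rest
    | _ => 0) ∘ₗ (MonoidAlgebra.coeffLinearEquiv ℚ).toLinearMap

/-- Grafting on the left leaf: `F ↗ G` grafts `F` on the leftmost leaf of `G`. -/
def graftLeaf (F : Forest) : Forest → Forest
  | [] => F
  | .node c :: rest => .node (graftLeaf F c) :: rest

/-- The product `↗` extended bilinearly to `H`. -/
noncomputable def glH : H →ₗ[ℚ] H →ₗ[ℚ] H :=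
  (Finsupp.lift (H →ₗ[ℚ] H) ℚ Forest fun F =>
    (Finsupp.lift H ℚ Forest fun G => bf (graftLeaf F G)) ∘ₗ (MonoidAlgebra.coeffLinearEquiv ℚ).toLinearMap) ∘ₗ (MonoidAlgebra.coeffLinearEquiv ℚ).toLinearMap

/-- The deconcatenation coproduct `Δ_↗(F) = Σ_{F_1·F_2 = F} F_1 ⊗ F_2`, the sum running
over all (possibly empty) factorizations of the forest `F` as a concatenation. -/
noncomputable def Δd : H →ₗ[ℚ] H ⊗[ℚ] H :=
  (Finsupp.lift (H ⊗[ℚ] H) ℚ Forest fun F =>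
    ∑ k ∈ Finset.range (F.length + 1), bf (F.take k) ⊗ₜ bf (F.drop k)) ∘ₗ (MonoidAlgebra.coeffLinearEquiv ℚ).toLinearMap

open TensorProduct

lemma lift_comp_coeffLinearEquiv_bf {M : Type*} [AddCommMonoid M] [Module ℚ M] (f : Forest → M)
    (F : Forest) :
    (Finsupp.lift M ℚ Forest f ∘ₗ (MonoidAlgebra.coeffLinearEquiv ℚ).toLinearMap) (bf F) = f F := by
  simp [bf]

lemma single_eq_smul_bf (F : Forest) (c : ℚ) : MonoidAlgebra.single F c = c • bf F := by
  simp [bf]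

@[elab_as_elim]
theorem bf_induction {motive : H → Prop} (x : H)
    (add : ∀ a b, motive a → motive b → motive (a + b))
    (smul : ∀ (c : ℚ) a, motive a → motive (c • a)) (basis : ∀ F, motive (bf F)) : motive x :=
  MonoidAlgebra.induction_linear x (by simpa using smul 0 _ (basis []))
    add fun F c => single_eq_smul_bf F c ▸ smul c _ (basis F)

lemma bf_nil : bf [] = 1 := rfl

lemma bf_append (F G : Forest) : bf (F ++ G) = bf F * bf G :=
  (MonoidAlgebra.of ℚ Forest).map_mul F G

lemma Bplus_bf (F : Forest) : Bplus (bf F) = bf [.node F] := lift_comp_coeffLinearEquiv_bf _ F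

lemma bf_cons (C A : Forest) : bf (.node C :: A) = Bplus (bf C) * bf A := by
  rw [Bplus_bf, ← bf_append, List.singleton_append]

lemma glH_bf (K G : Forest) : glH (bf K) (bf G) = bf (graftLeaf K G) := by
  rw [glH, lift_comp_coeffLinearEquiv_bf, lift_comp_coeffLinearEquiv_bf]

lemma Δd_bf (F : Forest) :
    Δd (bf F) = ∑ k ∈ Finset.range (F.length + 1), bf (F.take k) ⊗ₜ bf (F.drop k) :=
  lift_comp_coeffLinearEquiv_bf _ F

noncomputable def εH : H →ₗ[ℚ] ℚ :=
  Finsupp.lapply 1 ∘ₗ (MonoidAlgebra.coeffLinearEquiv ℚ).toLinearMap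

lemma εH_apply (x : H) : εH x = x.coeff 1 := rfl

lemma εH_bf_nil : εH (bf []) = 1 := Finsupp.single_eq_same

lemma εH_bf_cons (t : PTree) (F : Forest) : εH (bf (t :: F)) = 0 :=
  Finsupp.single_eq_of_ne (List.cons_ne_nil t F).symm

lemma graftLeaf_nil (K : Forest) : graftLeaf K [] = K := by simp [graftLeaf]

lemma graftLeaf_cons (K C A : Forest) :
    graftLeaf K (.node C :: A) = .node (graftLeaf K C) :: A := by simp [graftLeaf]

lemma gammaH_bf_cons (C A : Forest) : gammaH (bf (.node C :: A)) = εH (bf C) • bf A := by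
  rw [gammaH, lift_comp_coeffLinearEquiv_bf]
  cases C with
  | nil => rw [εH_bf_nil, one_smul]
  | cons t C => rw [εH_bf_cons, zero_smul]

lemma εH_Bplus_mul (b v : H) : εH (Bplus b * v) = 0 := by
  induction b using bf_induction with
  | add b b' hb hb' => rw [map_add, add_mul, map_add, hb, hb', add_zero]
  | smul c b hb => rw [map_smul, smul_mul_assoc, map_smul, hb, smul_zero]
  | basis C =>
    induction v using bf_induction with
    | add v v' hv hv' => rw [mul_add, map_add, hv, hv', add_zero]
    | smul c v hv => rw [mul_smul_comm, map_smul, hv, smul_zero]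
    | basis A => rw [← bf_cons, εH_bf_cons]

lemma gammaH_Bplus_mul (b v : H) : gammaH (Bplus b * v) = εH b • v := by
  induction b using bf_induction with
  | add b b' hb hb' => rw [map_add, add_mul, map_add, hb, hb', map_add, add_smul]
  | smul c b hb => rw [map_smul, smul_mul_assoc, map_smul, hb, map_smul, smul_assoc]
  | basis C =>
    induction v using bf_induction with
    | add v v' hv hv' => rw [mul_add, map_add, hv, hv', smul_add]
    | smul c v hv => rw [mul_smul_comm, map_smul, hv, smul_comm]
    | basis A => rw [← bf_cons, gammaH_bf_cons]

lemma glH_one (z : H) : glH z 1 = z := by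
  induction z using bf_induction with
  | add z z' hz hz' => rw [map_add, LinearMap.add_apply, hz, hz']
  | smul c z hz => rw [map_smul, LinearMap.smul_apply, hz]
  | basis K => rw [← bf_nil, glH_bf, graftLeaf_nil]

lemma εH_glH (z y : H) : εH (glH z y) = εH z * εH y := by
  induction z using bf_induction with
  | add z z' hz hz' => rw [map_add, LinearMap.add_apply, map_add, hz, hz', map_add, add_mul]
  | smul c z hz => simp only [map_smul, LinearMap.smul_apply, hz, smul_eq_mul, mul_assoc]
  | basis K =>
    induction y using bf_induction with
    | add y y' hy hy' => rw [map_add, map_add, hy, hy', map_add, mul_add]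
    | smul c y hy => simp only [map_smul, hy, smul_eq_mul, mul_left_comm]
    | basis G =>
      cases G with
      | nil => rw [glH_bf, graftLeaf_nil, εH_bf_nil, mul_one]
      | cons t G =>
        obtain ⟨C⟩ := t
        rw [glH_bf, graftLeaf_cons, εH_bf_cons, εH_bf_cons, mul_zero]

lemma glH_Bplus_bf_mul (z a : H) (C : Forest) :
    glH z (Bplus (bf C) * a) = Bplus (glH z (bf C)) * a := by
  induction z using bf_induction with
  | add z z' hz hz' => simp only [map_add, LinearMap.add_apply, add_mul, hz, hz']
  | smul c z hz => simp only [map_smul, LinearMap.smul_apply, smul_mul_assoc, hz]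
  | basis K =>
    induction a using bf_induction with
    | add a a' ha ha' => rw [mul_add, map_add, ha, ha', mul_add]
    | smul c a ha => rw [mul_smul_comm, map_smul, ha, mul_smul_comm]
    | basis A => rw [← bf_cons, glH_bf, glH_bf, graftLeaf_cons, bf_cons, Bplus_bf]

lemma glH_Bplus_bf (z : H) (C : Forest) : glH z (Bplus (bf C)) = Bplus (glH z (bf C)) := by
  simpa only [mul_one] using glH_Bplus_bf_mul z 1 C

lemma εH_one : εH 1 = 1 := εH_bf_nil

lemma gammaH_one : gammaH 1 = 0 := lift_comp_coeffLinearEquiv_bf _ []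

lemma TensorProduct.lift_smulRight_tmul {R M : Type*} [CommSemiring R] [AddCommMonoid M]
    [Module R M] (φ ψ : M →ₗ[R] R) (a b : M) : lift (φ.smulRight ψ) (a ⊗ₜ b) = φ a * ψ b :=
  rfl

section TensorAlgebra

variable {R A B C : Type*} [CommSemiring R] [Semiring A] [Algebra R A] [Semiring B] [Algebra R B]
  [Semiring C] [Algebra R C]

lemma LinearMap.lTensor_tmul_one_mul (f : B →ₗ[R] C) (x : A) (u : A ⊗[R] B) :
    f.lTensor A ((x ⊗ₜ 1) * u) = (x ⊗ₜ 1) * f.lTensor A u := by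
  induction u using TensorProduct.induction_on with
  | zero => simp only [mul_zero, map_zero]
  | tmul a b => simp only [Algebra.TensorProduct.tmul_mul_tmul, one_mul, LinearMap.lTensor_tmul]
  | add u v hu hv => rw [mul_add, map_add, hu, hv, map_add, mul_add]

lemma LinearMap.rTensor_tmul_one_mul (f : A →ₗ[R] A) {c : A} (hf : ∀ a, f (c * a) = f c * a)
    (u : A ⊗[R] B) : f.rTensor B ((c ⊗ₜ 1) * u) = (f c ⊗ₜ 1) * u := by
  induction u using TensorProduct.induction_on with
  | zero => simp only [mul_zero, map_zero]
  | tmul a b => simp only [Algebra.TensorProduct.tmul_mul_tmul, one_mul, LinearMap.rTensor_tmul, hf]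
  | add u v hu hv => rw [mul_add, map_add, hu, hv, mul_add]

end TensorAlgebra

noncomputable def counitRight : H ⊗[ℚ] H →ₗ[ℚ] H :=
  (TensorProduct.rid ℚ H).toLinearMap ∘ₗ LinearMap.lTensor H εH

lemma counitRight_tmul (a b : H) : counitRight (a ⊗ₜ b) = εH b • a := rfl

lemma counitRight_tmul_one_mul (x : H) (u : H ⊗[ℚ] H) :
    counitRight ((x ⊗ₜ 1) * u) = x * counitRight u := by
  induction u using TensorProduct.induction_on with
  | zero => simp only [mul_zero, map_zero]
  | tmul a b => rw [Algebra.TensorProduct.tmul_mul_tmul, one_mul, counitRight_tmul,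
      counitRight_tmul, mul_smul_comm]
  | add u v hu hv => rw [mul_add, map_add, hu, hv, map_add, mul_add]

lemma counitRight_lTensor_Bplus_mul (U : H ⊗[ℚ] H) (v : H) :
    counitRight (Bplus.lTensor H U * (1 ⊗ₜ v)) = 0 := by
  induction U using TensorProduct.induction_on with
  | zero => simp only [map_zero, zero_mul]
  | tmul a b => rw [LinearMap.lTensor_tmul, Algebra.TensorProduct.tmul_mul_tmul, mul_one,
      counitRight_tmul, εH_Bplus_mul, zero_smul]
  | add U V hU hV => rw [map_add, add_mul, map_add, hU, hV, add_zero]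

lemma lTensor_gammaH_lTensor_Bplus_mul (U : H ⊗[ℚ] H) (v : H) :
    gammaH.lTensor H (Bplus.lTensor H U * (1 ⊗ₜ v)) = counitRight U ⊗ₜ v := by
  induction U using TensorProduct.induction_on with
  | zero => simp only [map_zero, zero_mul, TensorProduct.zero_tmul]
  | tmul a b => rw [LinearMap.lTensor_tmul, Algebra.TensorProduct.tmul_mul_tmul, mul_one,
      LinearMap.lTensor_tmul, gammaH_Bplus_mul, counitRight_tmul, TensorProduct.tmul_smul,
      TensorProduct.smul_tmul']
  | add U V hU hV => rw [map_add, add_mul, map_add, hU, hV, map_add, TensorProduct.add_tmul]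

section CoproductAndPairing

variable {Δ : H →ₗ[ℚ] H ⊗[ℚ] H} (hΔ1 : Δ 1 = 1 ⊗ₜ 1)
  (hΔm : ∀ x y : H, Δ (x * y) = (x ⊗ₜ (1 : H)) * Δ y + Δ x * ((1 : H) ⊗ₜ y) - x ⊗ₜ y)
  (hΔB : ∀ x : H, Δ (Bplus x) = (Bplus x) ⊗ₜ 1 + (LinearMap.lTensor H Bplus) (Δ x))

include hΔm hΔB in
lemma Δ_Bplus_mul (u v : H) :
    Δ (Bplus u * v) = (Bplus u ⊗ₜ 1) * Δ v + Bplus.lTensor H (Δ u) * (1 ⊗ₜ v) := by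
  rw [hΔm, hΔB, add_mul, Algebra.TensorProduct.tmul_mul_tmul, one_mul, mul_one]
  abel

include hΔ1 hΔm hΔB in
lemma counitRight_Δ (x : H) : counitRight (Δ x) = x := by
  induction x using bf_induction with
  | add a b ha hb => rw [map_add, map_add, ha, hb]
  | smul c a ha => rw [map_smul, map_smul, ha]
  | basis F =>
    induction F with
    | nil => rw [bf_nil, hΔ1, counitRight_tmul, εH_one, one_smul]
    | cons t F ih =>
      obtain ⟨C⟩ := t
      rw [bf_cons, Δ_Bplus_mul hΔm hΔB, map_add, counitRight_tmul_one_mul, ih,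
        counitRight_lTensor_Bplus_mul, add_zero]

include hΔ1 hΔm hΔB in
lemma lTensor_gammaH_Δ_Bplus_mul (u v : H) :
    gammaH.lTensor H (Δ (Bplus u * v)) = (Bplus u ⊗ₜ 1) * gammaH.lTensor H (Δ v) + u ⊗ₜ v := by
  rw [Δ_Bplus_mul hΔm hΔB, map_add, LinearMap.lTensor_tmul_one_mul,
    lTensor_gammaH_lTensor_Bplus_mul, counitRight_Δ hΔ1 hΔm hΔB]

include hΔ1 hΔm hΔB in
lemma lTensor_gammaH_Δ_glH (z y : H) :
    gammaH.lTensor H (Δ (glH z y)) =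
      εH y • gammaH.lTensor H (Δ z) + map (glH z) gammaH (Δ y) := by
  induction y using bf_induction with
  | add y y' hy hy' => simp only [map_add, hy, hy', add_smul]; abel
  | smul c y hy => simp only [map_smul, hy, smul_add, smul_smul, smul_eq_mul]
  | basis G =>
    cases G with
    | nil => rw [bf_nil, glH_one, hΔ1, map_tmul, gammaH_one, tmul_zero, add_zero, εH_one,
        one_smul]
    | cons t A =>
      obtain ⟨C⟩ := t
      have hgraft : ∀ a, glH z (Bplus (bf C) * a) = glH z (Bplus (bf C)) * a := fun a => by
        rw [glH_Bplus_bf_mul, glH_Bplus_bf]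
      rw [bf_cons, glH_Bplus_bf_mul, εH_Bplus_mul, zero_smul, zero_add,
        lTensor_gammaH_Δ_Bplus_mul hΔ1 hΔm hΔB, ← LinearMap.rTensor_comp_lTensor,
        LinearMap.comp_apply, lTensor_gammaH_Δ_Bplus_mul hΔ1 hΔm hΔB, map_add,
        LinearMap.rTensor_tmul_one_mul _ hgraft, LinearMap.rTensor_tmul, glH_Bplus_bf]

variable {p : H →ₗ[ℚ] H →ₗ[ℚ] ℚ}
  (hp1 : ∀ x : H, p 1 x = x.coeff (1 : Forest))
  (hpm : ∀ x y z : H, p (x * y) z = TensorProduct.lift ((p y).smulRight (p x)) (Δ z))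
  (hpB : ∀ x y : H, p (Bplus x) y = p x (gammaH y))

include hpm hpB in
lemma pairing_bf_cons (C A : Forest) (w : H) :
    p (bf (.node C :: A)) w =
      lift ((p (bf A)).smulRight (p (bf C))) (gammaH.lTensor H (Δ w)) := by
  rw [bf_cons, hpm, ← LinearMap.comp_apply (lift _) (gammaH.lTensor H)]
  refine LinearMap.congr_fun (TensorProduct.ext' fun a b => ?_) (Δ w)
  rw [LinearMap.comp_apply, LinearMap.lTensor_tmul, lift_smulRight_tmul, lift_smulRight_tmul,
    hpB]

include hΔ1 hΔm hΔB hp1 hpm hpB in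
lemma sum_pairing_take_drop_eq_pairing_glH (F : Forest) (y z : H) :
    ∑ k ∈ Finset.range (F.length + 1), p (bf (F.take k)) y * p (bf (F.drop k)) z =
      p (bf F) (glH z y) := by
  induction F generalizing y with
  | nil =>
    simp only [List.length_nil, zero_add, Finset.sum_range_one, List.take_nil, List.drop_nil,
      bf_nil, hp1, ← εH_apply, εH_glH, mul_comm]
  | cons t F ih =>
    obtain ⟨C⟩ := t
    have hshift : ∀ u, ∑ j ∈ Finset.range (F.length + 1),
        lift ((p (bf (F.take j))).smulRight (p (bf C))) (gammaH.lTensor H u) *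
          p (bf (F.drop j)) z =
        lift ((p (bf F)).smulRight (p (bf C))) (map (glH z) gammaH u) := by
      intro u
      induction u using TensorProduct.induction_on with
      | zero => simp only [map_zero, zero_mul, Finset.sum_const_zero]
      | tmul a b =>
        simp only [LinearMap.lTensor_tmul, map_tmul, lift_smulRight_tmul, ← ih a,
          Finset.sum_mul]
        exact Finset.sum_congr rfl fun _ _ => by ring
      | add u v hu hv => simp only [map_add, add_mul, Finset.sum_add_distrib, hu, hv]
    rw [Finset.sum_range_succ', pairing_bf_cons hpm hpB C F (glH z y),
      lTensor_gammaH_Δ_glH hΔ1 hΔm hΔB, map_add, map_smul, ← pairing_bf_cons hpm hpB, ← hshift]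
    simp only [List.length_cons, List.take_succ_cons, List.drop_succ_cons, List.take_zero,
      List.drop_zero, pairing_bf_cons hpm hpB C (F.take _), bf_nil, hp1, ← εH_apply, smul_eq_mul]
    ring

end CoproductAndPairing

lemma Δd_bf_singleton (t : PTree) : Δd (bf [t]) = bf [t] ⊗ₜ 1 + 1 ⊗ₜ bf [t] := by
  rw [Δd_bf, List.length_singleton, Finset.sum_range_succ, Finset.sum_range_one]
  simp only [List.take_zero, List.drop_zero, List.take_succ_cons, List.take_nil,
    List.drop_succ_cons, List.drop_nil, bf_nil, add_comm]

/-- The deconcatenation coproduct `Δ_↗` is dual to the product `↗` under the pairing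
`⟨−,−⟩` of the infinitesimal Hopf algebra `H` (characterized by `⟨1,x⟩ = ε(x)`,
`⟨xy,z⟩ = ⟨y⊗x,Δ(z)⟩`, `⟨B⁺(x),y⟩ = ⟨x,γ(y)⟩`):
`⟨Δ_↗(x), y⊗z⟩ = ⟨x, z ↗ y⟩` for all `x, y, z`; in particular every planar tree is
primitive for `Δ_↗`. -/
theorem deconcatenation_dual_to_graftLeaf (Δ : H →ₗ[ℚ] H ⊗[ℚ] H)
    (hΔ1 : Δ 1 = 1 ⊗ₜ 1)
    (hΔm : ∀ x y : H, Δ (x * y) = (x ⊗ₜ (1 : H)) * Δ y + Δ x * ((1 : H) ⊗ₜ y) - x ⊗ₜ y)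
    (hΔB : ∀ x : H, Δ (Bplus x) = (Bplus x) ⊗ₜ 1 + (LinearMap.lTensor H Bplus) (Δ x))
    (p : H →ₗ[ℚ] H →ₗ[ℚ] ℚ)
    (hp1 : ∀ x : H, p 1 x = x.coeff (1 : Forest))
    (hpm : ∀ x y z : H,
      p (x * y) z = TensorProduct.lift ((p y).smulRight (p x)) (Δ z))
    (hpB : ∀ x y : H, p (Bplus x) y = p x (gammaH y)) :
    (∀ x y z : H,
      TensorProduct.lift ((p.flip y).smulRight (p.flip z)) (Δd x) = p x (glH z y)) ∧
    (∀ t : PTree, Δd (bf [t]) = bf [t] ⊗ₜ 1 + 1 ⊗ₜ bf [t]) := by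
  refine ⟨fun x y z => ?_, Δd_bf_singleton⟩
  induction x using bf_induction with
  | add a b ha hb => simp only [map_add, LinearMap.add_apply, ha, hb]
  | smul c a ha => simp only [map_smul, LinearMap.smul_apply, ha]
  | basis F =>
    simp only [Δd_bf, map_sum, lift_smulRight_tmul, LinearMap.flip_apply]
    exact sum_pairing_take_drop_eq_pairing_glH hΔ1 hΔm hΔB hp1 hpm hpB F y z
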